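/- arXiv:2509.05673 — 5 statements merged into one kernel-verified Lean document; each statement's English description precedes it below -/
import Mathlib

section
/- If R is a weakly strongly 2-nil-clean ring in which 6 is nilpotent, then R is strongly 2-nil-clean. -/
/-!
Since `6 = 2 * 3` is nilpotent and `2`, `3` are coprime, there is an idempotent `c` with `2 c` and
`3 (1 - c)` nilpotent, splitting the ring into a part where `2` is nilpotent and one where `3` is.
Where `2` is nilpotent the signs in `±e ± f + n` are irrelevant. Where `3` is, `-f ≡ 2 f`, and
`e - f`, `-e - f` become sums of two idempotents of the Boolean algebra generated by `e` and `f`: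
`e - f ≡ (e + f - 2 e f) + (1 - e) f` and `-e - f ≡ (e + f - e f) + (e + f - 2 e f)`. The two
decompositions glue along `c`. All of this happens in the commutative subring generated by
`e`, `f`, `n`.
-/

/-- A ring is weakly strongly 2-nil-clean if every element is `±e ± f + n` with
`e, f` idempotents and `n` nilpotent, all commuting with each other. -/
def IsWeaklyStrongly2NilClean (R : Type*) [Ring R] : Prop :=
  ∀ a : R, ∃ e f n : R, IsIdempotentElem e ∧ IsIdempotentElem f ∧ IsNilpotent n ∧
    Commute e f ∧ Commute e n ∧ Commute f n ∧
    (a = e + f + n ∨ a = e - f + n ∨ a = -e + f + n ∨ a = -e - f + n)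

/-- A ring is strongly 2-nil-clean if every element is `e + f + n` with
`e, f` idempotents and `n` nilpotent, all commuting with each other. -/
def IsStrongly2NilClean (R : Type*) [Ring R] : Prop :=
  ∀ a : R, ∃ e f n : R, IsIdempotentElem e ∧ IsIdempotentElem f ∧ IsNilpotent n ∧
    Commute e f ∧ Commute e n ∧ Commute f n ∧ a = e + f + n

def IsSignedSum {R : Type*} [Ring R] (a e f n : R) : Prop :=
  a = e + f + n ∨ a = e - f + n ∨ a = -e + f + n ∨ a = -e - f + n

theorem IsSignedSum.exists_eq_add_two_mul {R : Type*} [Ring R] {a e f n : R}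
    (ha : IsSignedSum a e f n) : ∃ x, a = e + f + n + 2 * x := by
  rcases ha with rfl | rfl | rfl | rfl
  · exact ⟨0, by noncomm_ring⟩
  · exact ⟨-f, by noncomm_ring⟩
  · exact ⟨-e, by noncomm_ring⟩
  · exact ⟨-(e + f), by noncomm_ring⟩

section CommRing

variable {A : Type*} [CommRing A]

theorem IsIdempotentElem.mul_add_mul_one_sub {c e₁ e₂ : A} (hc : IsIdempotentElem c)
    (he₁ : IsIdempotentElem e₁) (he₂ : IsIdempotentElem e₂) :
    IsIdempotentElem (e₁ * c + e₂ * (1 - c)) := by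
  unfold IsIdempotentElem at *
  linear_combination
    (c * c) * he₁ + ((1 - c) * (1 - c)) * he₂ + (e₁ + e₂ - 2 * e₁ * e₂) * hc

theorem IsIdempotentElem.add_sub_two_mul {e f : A} (he : IsIdempotentElem e)
    (hf : IsIdempotentElem f) : IsIdempotentElem (e + f - 2 * (e * f)) := by
  unfold IsIdempotentElem at *
  linear_combination (1 + 4 * f * f - 4 * f) * he + hf

theorem IsCoprime.exists_isIdempotentElem_isNilpotent_mul {p q : A} (hpq : IsCoprime p q)
    (h : IsNilpotent (p * q)) :
    ∃ c : A, IsIdempotentElem c ∧ IsNilpotent (p * c) ∧ IsNilpotent (q * (1 - c)) := by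
  obtain ⟨K, hK⟩ := h
  have hK' : (p * q) ^ (K + 1) = 0 := by rw [pow_succ, hK, zero_mul]
  obtain ⟨u, v, huv⟩ := hpq.pow (m := K + 1) (n := K + 1)
  have hc : IsIdempotentElem (v * q ^ (K + 1)) := by
    rw [isIdempotentElem_iff_mul_one_sub_self]
    linear_combination (u * v) * hK' - (v * q ^ (K + 1)) * huv
  refine ⟨_, hc, ⟨K + 1, ?_⟩, ⟨K + 1, ?_⟩⟩
  · rw [mul_pow, hc.pow_succ_eq]
    linear_combination v * hK'
  · rw [mul_pow, hc.one_sub.pow_succ_eq]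
    linear_combination u * hK' - q ^ (K + 1) * huv

theorem IsSignedSum.exists_eq_add_three_mul {a e f n : A} (ha : IsSignedSum a e f n)
    (he : IsIdempotentElem e) (hf : IsIdempotentElem f) :
    ∃ e' f', IsIdempotentElem e' ∧ IsIdempotentElem f' ∧ ∃ y, a = e' + f' + n + 3 * y := by
  rcases ha with rfl | rfl | rfl | rfl
  · exact ⟨e, f, he, hf, 0, by ring⟩
  · exact ⟨e + f - 2 * (e * f), (1 - e) * f, he.add_sub_two_mul hf, he.one_sub.mul hf,
      -((1 - e) * f), by ring⟩
  · exact ⟨e + f - 2 * (e * f), (1 - f) * e, he.add_sub_two_mul hf, hf.one_sub.mul he,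
      -((1 - f) * e), by ring⟩
  · exact ⟨e + f - e * f, e + f - 2 * (e * f), he.add_sub_mul hf, he.add_sub_two_mul hf,
      -(e + f - e * f), by ring⟩

/-- `c` splits `A` as `A c × A (1 - c)`, with `p` nilpotent on the first factor and `q` on
the second. -/
theorem IsIdempotentElem.exists_eq_add_add_of_isNilpotent_mul
    {c p q a e₁ f₁ e₂ f₂ n x y : A} (hc : IsIdempotentElem c) (hp : IsNilpotent (p * c))
    (hq : IsNilpotent (q * (1 - c)))
    (he₁ : IsIdempotentElem e₁) (hf₁ : IsIdempotentElem f₁) (he₂ : IsIdempotentElem e₂)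
    (hf₂ : IsIdempotentElem f₂) (hn : IsNilpotent n)
    (h₁ : a = e₁ + f₁ + n + p * x) (h₂ : a = e₂ + f₂ + n + q * y) :
    ∃ E F N, IsIdempotentElem E ∧ IsIdempotentElem F ∧ IsNilpotent N ∧ a = E + F + N := by
  refine ⟨e₁ * c + e₂ * (1 - c), f₁ * c + f₂ * (1 - c), n + p * c * x + q * (1 - c) * y,
    hc.mul_add_mul_one_sub he₁ he₂, hc.mul_add_mul_one_sub hf₁ hf₂, ?_,
    by linear_combination c * h₁ + (1 - c) * h₂⟩
  simp only [← mem_nilradical] at hn hp hq ⊢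
  exact add_mem (add_mem hn (Ideal.mul_mem_right x _ hp)) (Ideal.mul_mem_right y _ hq)

theorem IsSignedSum.exists_eq_add_add_of_isNilpotent_six (h6 : IsNilpotent (6 : A))
    {a e f n : A} (ha : IsSignedSum a e f n) (he : IsIdempotentElem e) (hf : IsIdempotentElem f)
    (hn : IsNilpotent n) :
    ∃ E F N, IsIdempotentElem E ∧ IsIdempotentElem F ∧ IsNilpotent N ∧ a = E + F + N := by
  obtain ⟨c, hc, h2, h3⟩ := IsCoprime.exists_isIdempotentElem_isNilpotent_mul
    (p := (2 : A)) (q := 3) ⟨-1, 1, by norm_num⟩ (by norm_num [h6])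
  obtain ⟨x, hx⟩ := ha.exists_eq_add_two_mul
  obtain ⟨e', f', he', hf', y, hy⟩ := ha.exists_eq_add_three_mul he hf
  exact hc.exists_eq_add_add_of_isNilpotent_mul h2 h3 he hf he' hf' hn hx hy

end CommRing

open scoped IsMulCommutative in
theorem IsSignedSum.exists_eq_add_add_of_commute_of_isNilpotent_six {R : Type*} [Ring R]
    (h6 : IsNilpotent (6 : R)) {a e f n : R} (ha : IsSignedSum a e f n)
    (he : IsIdempotentElem e) (hf : IsIdempotentElem f) (hn : IsNilpotent n)
    (hef : Commute e f) (hen : Commute e n) (hfn : Commute f n) :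
    ∃ E F N, IsIdempotentElem E ∧ IsIdempotentElem F ∧ IsNilpotent N ∧
      Commute E F ∧ Commute E N ∧ Commute F N ∧ a = E + F + N := by
  let S := Subring.closure ({e, f, n} : Set R)
  have : IsMulCommutative S := Subring.isMulCommutative_closure <| by
    simp only [Set.mem_insert_iff, Set.mem_singleton_iff]
    rintro x (rfl | rfl | rfl) y (rfl | rfl | rfl) <;>
      first | rfl | exact Commute.eq ‹_› | exact (Commute.symm ‹_›).eq
  have heS : e ∈ S := Subring.subset_closure (by simp)
  have hfS : f ∈ S := Subring.subset_closure (by simp)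
  have hnS : n ∈ S := Subring.subset_closure (by simp)
  have haS : a ∈ S := by
    rcases ha with rfl | rfl | rfl | rfl
    exacts [add_mem (add_mem heS hfS) hnS, add_mem (sub_mem heS hfS) hnS,
      add_mem (add_mem (neg_mem heS) hfS) hnS, add_mem (sub_mem (neg_mem heS) hfS) hnS]
  have hinj : Function.Injective S.subtype := Subtype.val_injective
  obtain ⟨E, F, N, hE, hF, hN, hsum⟩ :=
    IsSignedSum.exists_eq_add_add_of_isNilpotent_six (A := S) (a := ⟨a, haS⟩)
      (e := ⟨e, heS⟩) (f := ⟨f, hfS⟩) (n := ⟨n, hnS⟩)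
      ((IsNilpotent.map_iff hinj).mp (by rwa [map_ofNat]))
      (by simpa [IsSignedSum, Subtype.ext_iff] using ha) (Subtype.ext he) (Subtype.ext hf)
      ((IsNilpotent.map_iff hinj).mp hn)
  exact ⟨E, F, N, hE.map S.subtype, hF.map S.subtype, hN.map S.subtype,
    (Commute.all E F).map S.subtype, (Commute.all E N).map S.subtype,
    (Commute.all F N).map S.subtype, congrArg Subtype.val hsum⟩

theorem strongly2NilClean_of_wsnc_six_nilpotent {R : Type*} [Ring R]
    (hR : IsWeaklyStrongly2NilClean R) (h6 : IsNilpotent (6 : R)) :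
    IsStrongly2NilClean R := by
  intro a
  obtain ⟨e, f, n, he, hf, hn, hef, hen, hfn, ha⟩ := hR a
  exact IsSignedSum.exists_eq_add_add_of_commute_of_isNilpotent_six h6 ha he hf hn hef hen hfn
end

section
/- Let R be a weakly strongly 2-nil-clean ring. If there exist idempotents e, f ∈ R and a nilpotent n ∈ R, commuting with each other, such that -2 = e + f + n or -2 = e - f + n, then R is strongly 2-nil-clean. -/
/-!
Writing `-2 = e ± f + n` and using that `e + f` is a root of `X (X - 1) (X - 2)` and `e - f` a
root of `X (X - 1) (X + 1)`, one finds that `6` is nilpotent. Hence the ring splits, by an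
idempotent `u`, into a part `uR` where `2` is nilpotent and a part `(1 - u)R` where `3` is
nilpotent. In the first, `-x ≡ x` modulo nilpotents; in the second, `e - f`, `-e + f`, `-e - f`
are sums of two idempotents built from `e, f` up to multiples of `3`. Gluing the two
decompositions along `u` gives the result. All of this happens in the commutative subring
generated by `e`, `f`, `n`.
-/

universe u

def IsStrongly2NilCleanElem {R : Type*} [Ring R] (a : R) : Prop :=
  ∃ e f n : R, IsIdempotentElem e ∧ IsIdempotentElem f ∧ IsNilpotent n ∧
    Commute e f ∧ Commute e n ∧ Commute f n ∧ a = e + f + n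

theorem IsStrongly2NilCleanElem.map {S R F : Type*} [Ring S] [Ring R] [FunLike F S R]
    [RingHomClass F S R] (φ : F) {a : S} (h : IsStrongly2NilCleanElem a) :
    IsStrongly2NilCleanElem (φ a) := by
  obtain ⟨e, f, n, he, hf, hn, hef, hen, hfn, rfl⟩ := h
  exact ⟨φ e, φ f, φ n, he.map φ, hf.map φ, hn.map φ, hef.map φ, hen.map φ, hfn.map φ,
    by simp only [map_add]⟩

open scoped IsMulCommutative in
theorem exists_injective_ringHom_of_pairwise_commute {R : Type u} [Ring R] {s : Set R}
    (hs : ∀ x ∈ s, ∀ y ∈ s, Commute x y) :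
    ∃ (S : Type u) (_ : CommRing S) (φ : S →+* R), Function.Injective φ ∧ s ⊆ Set.range φ := by
  have := Subring.isMulCommutative_closure hs
  exact ⟨Subring.closure s, inferInstance, (Subring.closure s).subtype, Subtype.val_injective,
    fun x hx => ⟨⟨x, Subring.subset_closure hx⟩, rfl⟩⟩

theorem exists_injective_ringHom_of_commute {R : Type u} [Ring R] {e f n : R}
    (hef : Commute e f) (hen : Commute e n) (hfn : Commute f n) :
    ∃ (S : Type u) (_ : CommRing S) (φ : S →+* R), Function.Injective φ ∧
      ∃ e' f' n' : S, φ e' = e ∧ φ f' = f ∧ φ n' = n := by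
  obtain ⟨S, _, φ, hφ, hs⟩ := exists_injective_ringHom_of_pairwise_commute (s := {e, f, n})
    (by simp [hef, hen, hfn, hef.symm, hen.symm, hfn.symm])
  obtain ⟨e', rfl⟩ := hs (show e ∈ _ by simp)
  obtain ⟨f', rfl⟩ := hs (show f ∈ _ by simp)
  obtain ⟨n', rfl⟩ := hs (show n ∈ _ by simp)
  exact ⟨S, inferInstance, φ, hφ, e', f', n', rfl, rfl, rfl⟩

section CommRing

variable {S : Type*} [CommRing S]

theorem isNilpotent_six_of_neg_two_eq {e f n : S} (he : IsIdempotentElem e)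
    (hf : IsIdempotentElem f) (hn : IsNilpotent n) (h : -2 = e + f + n ∨ -2 = e - f + n) :
    IsNilpotent (6 : S) := by
  rcases h with h | h
  · have hroot : (e + f) * (e + f - 1) * (e + f - 2) = 0 := by
      linear_combination (e + 3 * f - 2) * he.eq + (f + 3 * e - 2) * hf.eq
    rw [show e + f = -2 - n by linear_combination -h] at hroot
    have h24 : IsNilpotent (24 : S) := by
      rw [show (24 : S) = n * -(26 + 9 * n + n ^ 2) by linear_combination -hroot]
      exact (Commute.all _ _).isNilpotent_mul_right hn
    refine IsNilpotent.of_pow (m := 3) ?_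
    rw [show (6 : S) ^ 3 = 9 * 24 by norm_num]
    exact (Commute.all _ _).isNilpotent_mul_left h24
  · have hroot : (e - f) * (e - f - 1) * (e - f + 1) = 0 := by
      linear_combination (e - 3 * f + 1) * he.eq + (3 * e - f - 1) * hf.eq
    rw [show e - f = -2 - n by linear_combination -h] at hroot
    rw [show (6 : S) = n * -(11 + 6 * n + n ^ 2) by linear_combination -hroot]
    exact (Commute.all _ _).isNilpotent_mul_right hn

theorem exists_isIdempotentElem_of_isNilpotent_mul {a b : S} (hab : IsCoprime a b)
    (h : IsNilpotent (a * b)) :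
    ∃ u : S, IsIdempotentElem u ∧ IsNilpotent (a * u) ∧ IsNilpotent (b * (1 - u)) := by
  obtain ⟨k, hk⟩ := h
  have hk : a ^ (k + 1) * b ^ (k + 1) = 0 := by rw [← mul_pow, pow_succ, hk, zero_mul]
  obtain ⟨x, y, hxy⟩ := hab.pow (m := k + 1) (n := k + 1)
  have hidem : IsIdempotentElem (y * b ^ (k + 1)) :=
    (IsIdempotentElem.of_mul_add (a := y * b ^ (k + 1)) (b := x * a ^ (k + 1))
      (by linear_combination x * y * hk) (by linear_combination hxy)).1
  refine ⟨y * b ^ (k + 1), hidem, ⟨k + 1, ?_⟩, ⟨k + 1, ?_⟩⟩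
  · rw [mul_pow, hidem.pow_succ_eq]
    linear_combination y * hk
  · rw [mul_pow, hidem.one_sub.pow_succ_eq]
    linear_combination x * hk - b ^ (k + 1) * hxy

theorem isStrongly2NilCleanElem_of_corners {u a E₁ F₁ E₂ F₂ : S} (hu : IsIdempotentElem u)
    (hE₁ : IsIdempotentElem E₁) (hF₁ : IsIdempotentElem F₁) (hE₂ : IsIdempotentElem E₂)
    (hF₂ : IsIdempotentElem F₂) (h₁ : IsNilpotent (u * (a - E₁ - F₁)))
    (h₂ : IsNilpotent ((1 - u) * (a - E₂ - F₂))) : IsStrongly2NilCleanElem a := by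
  have glue {x y : S} (hx : IsIdempotentElem x) (hy : IsIdempotentElem y) :
      IsIdempotentElem (u * x + (1 - u) * y) := by
    unfold IsIdempotentElem
    linear_combination (x - 2 * x * y + y) * hu.eq + u ^ 2 * hx.eq + (1 - u) ^ 2 * hy.eq
  refine ⟨_, _, _, glue hE₁ hE₂, glue hF₁ hF₂, (Commute.all _ _).isNilpotent_add h₁ h₂,
    .all _ _, .all _ _, .all _ _, by ring⟩

theorem exists_isIdempotentElem_add_sub_three_mul {a e f n : S} (he : IsIdempotentElem e)
    (hf : IsIdempotentElem f)
    (ha : a = e + f + n ∨ a = e - f + n ∨ a = -e + f + n ∨ a = -e - f + n) :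
    ∃ E F c : S, IsIdempotentElem E ∧ IsIdempotentElem F ∧ a = E + F + n - 3 * c := by
  have hsymmDiff : IsIdempotentElem (e + f - 2 * (e * f)) := by
    unfold IsIdempotentElem
    linear_combination (1 + 4 * f ^ 2 - 4 * f) * he.eq + hf.eq
  rcases ha with rfl | rfl | rfl | rfl
  · exact ⟨e, f, 0, he, hf, by ring⟩
  · exact ⟨_, _, f * (1 - e), hsymmDiff, hf.mul he.one_sub, by ring⟩
  · exact ⟨_, _, e * (1 - f), he.mul hf.one_sub, hsymmDiff, by ring⟩
  · exact ⟨_, _, e + f - e * f, hsymmDiff, he.add_sub_mul hf, by ring⟩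

theorem isStrongly2NilCleanElem_of_isNilpotent_six (h6 : IsNilpotent (6 : S)) {a e f n : S}
    (he : IsIdempotentElem e) (hf : IsIdempotentElem f) (hn : IsNilpotent n)
    (ha : a = e + f + n ∨ a = e - f + n ∨ a = -e + f + n ∨ a = -e - f + n) :
    IsStrongly2NilCleanElem a := by
  obtain ⟨u, hu, h2u, h3u⟩ := exists_isIdempotentElem_of_isNilpotent_mul (a := (2 : S)) (b := 3)
    ⟨-1, 1, by norm_num⟩ (by norm_num [h6])
  obtain ⟨c, hc⟩ : ∃ c, a = e + f + n - 2 * c := by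
    rcases ha with rfl | rfl | rfl | rfl
    exacts [⟨0, by ring⟩, ⟨f, by ring⟩, ⟨e, by ring⟩, ⟨e + f, by ring⟩]
  obtain ⟨E, F, d, hE, hF, hd⟩ := exists_isIdempotentElem_add_sub_three_mul he hf ha
  refine isStrongly2NilCleanElem_of_corners hu he hf hE hF ?_ ?_
  · rw [show u * (a - e - f) = u * n - 2 * u * c by rw [hc]; ring]
    exact (Commute.all _ _).isNilpotent_sub ((Commute.all _ _).isNilpotent_mul_left hn)
      ((Commute.all _ _).isNilpotent_mul_right h2u)
  · rw [show (1 - u) * (a - E - F) = (1 - u) * n - 3 * (1 - u) * d by rw [hd]; ring]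
    exact (Commute.all _ _).isNilpotent_sub ((Commute.all _ _).isNilpotent_mul_left hn)
      ((Commute.all _ _).isNilpotent_mul_right h3u)

end CommRing

section Ring

variable {R : Type u} [Ring R] {e f n : R}

theorem isNilpotent_six_of_neg_two_eq_of_commute (he : IsIdempotentElem e)
    (hf : IsIdempotentElem f) (hn : IsNilpotent n) (hef : Commute e f) (hen : Commute e n)
    (hfn : Commute f n) (h : -2 = e + f + n ∨ -2 = e - f + n) : IsNilpotent (6 : R) := by
  obtain ⟨S, _, φ, hφ, e, f, n, rfl, rfl, rfl⟩ := exists_injective_ringHom_of_commute hef hen hfn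
  have h' : -2 = e + f + n ∨ -2 = e - f + n :=
    h.imp (fun h => hφ (by simpa [map_ofNat φ 2] using h))
      (fun h => hφ (by simpa [map_ofNat φ 2] using h))
  simpa [map_ofNat φ 6] using (isNilpotent_six_of_neg_two_eq (hφ (by simpa using he.eq))
    (hφ (by simpa using hf.eq)) ((IsNilpotent.map_iff hφ).mp hn) h').map φ

theorem isStrongly2NilCleanElem_of_isNilpotent_six_of_commute (h6 : IsNilpotent (6 : R)) {a : R}
    (he : IsIdempotentElem e) (hf : IsIdempotentElem f) (hn : IsNilpotent n) (hef : Commute e f)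
    (hen : Commute e n) (hfn : Commute f n)
    (ha : a = e + f + n ∨ a = e - f + n ∨ a = -e + f + n ∨ a = -e - f + n) :
    IsStrongly2NilCleanElem a := by
  obtain ⟨S, _, φ, hφ, e, f, n, rfl, rfl, rfl⟩ := exists_injective_ringHom_of_commute hef hen hfn
  have h6' : IsNilpotent (6 : S) := (IsNilpotent.map_iff hφ).mp (by rwa [map_ofNat φ 6])
  have he' : IsIdempotentElem e := hφ (by simpa using he.eq)
  have hf' : IsIdempotentElem f := hφ (by simpa using hf.eq)
  have hn' : IsNilpotent n := (IsNilpotent.map_iff hφ).mp hn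
  have key (a : S) (ha : a = e + f + n ∨ a = e - f + n ∨ a = -e + f + n ∨ a = -e - f + n) :
      IsStrongly2NilCleanElem (φ a) :=
    (isStrongly2NilCleanElem_of_isNilpotent_six h6' he' hf' hn' ha).map φ
  rcases ha with rfl | rfl | rfl | rfl <;> simp only [← map_neg, ← map_sub, ← map_add] <;>
    exact key _ (by simp)

end Ring

theorem strongly2NilClean_of_wsnc_neg_two {R : Type*} [Ring R]
    (hR : IsWeaklyStrongly2NilClean R)
    (h : ∃ e f n : R, IsIdempotentElem e ∧ IsIdempotentElem f ∧ IsNilpotent n ∧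
      Commute e f ∧ Commute e n ∧ Commute f n ∧
      ((-2 : R) = e + f + n ∨ (-2 : R) = e - f + n)) :
    IsStrongly2NilClean R := by
  obtain ⟨e, f, n, he, hf, hn, hef, hen, hfn, h⟩ := h
  have h6 := isNilpotent_six_of_neg_two_eq_of_commute he hf hn hef hen hfn h
  intro a
  obtain ⟨e, f, n, he, hf, hn, hef, hen, hfn, ha⟩ := hR a
  exact isStrongly2NilCleanElem_of_isNilpotent_six_of_commute h6 he hf hn hef hen hfn ha
end

section
/- Every weakly strongly 2-nil-clean ring R is strongly π-regular: for every a ∈ R there exists a positive integer n such that a^n ∈ a^{n+1}R. -/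
/-!
Every `±e ± f` with `e, f` commuting idempotents is a root of `X (X ^ 2 - 1) (X ^ 2 - 4)`, so this
polynomial takes a nilpotent value at any `a = ±e ± f + n`; at `a = 3` that value is `120`. Modulo
the polynomial and `120`, `a ^ 5` is a multiple of `a ^ 6`, and a nilpotent error term only raises
the exponent. Each computation takes place in the commutative subalgebra generated by the
commuting elements involved.
-/

open Polynomial
open scoped IsMulCommutative

def IsStronglyPiRegular {M : Type*} [Monoid M] (a : M) : Prop :=
  ∃ n : ℕ, 0 < n ∧ ∃ r : M, a ^ n = a ^ (n + 1) * r

theorem IsStronglyPiRegular.map {M N F : Type*} [Monoid M] [Monoid N] [FunLike F M N]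
    [MonoidHomClass F M N] (φ : F) {a : M} (ha : IsStronglyPiRegular a) :
    IsStronglyPiRegular (φ a) := by
  obtain ⟨n, hn, r, h⟩ := ha
  exact ⟨n, hn, φ r, by rw [← map_pow, ← map_pow, ← map_mul, h]⟩

noncomputable def quintic : ℤ[X] := X * (X ^ 2 - 1) * (X ^ 2 - 4)

theorem aeval_quintic {A : Type*} [Ring A] (a : A) :
    aeval a quintic = a * (a ^ 2 - 1) * (a ^ 2 - 4) := by
  simp [quintic, map_ofNat]

section CommRing

variable {A : Type*} [CommRing A] {e f n a : A}

theorem IsIdempotentElem.add_mul_add_sub_one_mul_add_sub_two (he : IsIdempotentElem e)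
    (hf : IsIdempotentElem f) : (e + f) * (e + f - 1) * (e + f - 2) = 0 := by
  linear_combination (e + 3 * f - 2) * he.eq + (f + 3 * e - 2) * hf.eq

theorem IsIdempotentElem.sub_pow_three (he : IsIdempotentElem e) (hf : IsIdempotentElem f) :
    (e - f) ^ 3 = e - f := by
  linear_combination (e - 3 * f + 1) * he.eq + (3 * e - f - 1) * hf.eq

theorem aeval_quintic_eq_zero (he : IsIdempotentElem e) (hf : IsIdempotentElem f) {y : A}
    (hy : y = e + f ∨ y = e - f ∨ y = -e + f ∨ y = -e - f) :
    aeval y quintic = 0 := by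
  have hsum := he.add_mul_add_sub_one_mul_add_sub_two hf
  have hdiff := he.sub_pow_three hf
  rw [aeval_quintic]
  rcases hy with rfl | rfl | rfl | rfl
  · linear_combination (e + f + 1) * (e + f + 2) * hsum
  · linear_combination ((e - f) ^ 2 - 4) * hdiff
  · linear_combination (4 - (e - f) ^ 2) * hdiff
  · linear_combination -(e + f + 1) * (e + f + 2) * hsum

theorem isNilpotent_aeval_quintic_of_isIdempotentElem (he : IsIdempotentElem e)
    (hf : IsIdempotentElem f) (hn : IsNilpotent n)
    (ha : a = e + f + n ∨ a = e - f + n ∨ a = -e + f + n ∨ a = -e - f + n) :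
    IsNilpotent (aeval a quintic) := by
  have hroot : aeval (a - n) quintic = 0 :=
    aeval_quintic_eq_zero he hf <| by rcases ha with rfl | rfl | rfl | rfl <;> simp
  simpa [hroot] using isNilpotent_aeval_sub_of_isNilpotent_sub quintic (b := a - n) (by simpa)

theorem isStronglyPiRegular_of_isNilpotent_pow_sub_pow_mul {g : A} {m : ℕ} (hm : 0 < m)
    (h : IsNilpotent (a ^ m - a ^ (m + 1) * g)) : IsStronglyPiRegular a := by
  obtain ⟨k, hk⟩ := h
  obtain ⟨c, hc⟩ := sub_dvd_pow_sub_pow (1 : A) (1 - a * g) (k + 1)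
  refine ⟨m * (k + 1), by positivity, g * c, ?_⟩
  have hzero : a ^ (m * (k + 1)) * (1 - a * g) ^ (k + 1) = 0 := by
    have hfactor : a ^ m - a ^ (m + 1) * g = a ^ m * (1 - a * g) := by ring
    rw [pow_mul, ← mul_pow, ← hfactor]
    exact pow_eq_zero_of_le k.le_succ hk
  linear_combination a ^ (m * (k + 1)) * hc + hzero

end CommRing

theorem isNilpotent_aeval_quintic_of_commute {R : Type*} [Ring R] {e f n a : R}
    (he : IsIdempotentElem e) (hf : IsIdempotentElem f) (hn : IsNilpotent n)
    (hef : Commute e f) (hen : Commute e n) (hfn : Commute f n)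
    (ha : a = e + f + n ∨ a = e - f + n ∨ a = -e + f + n ∨ a = -e - f + n) :
    IsNilpotent (aeval a quintic) := by
  let S := Algebra.adjoin ℤ {e, f, n}
  have : IsMulCommutative S := Algebra.isMulCommutative_adjoin ℤ <| by
    simp only [Set.mem_insert_iff, Set.mem_singleton_iff]
    rintro x (rfl | rfl | rfl) y (rfl | rfl | rfl) <;>
      first | rfl | assumption | exact Commute.symm ‹_›
  have heS : e ∈ S := Algebra.subset_adjoin (by simp)
  have hfS : f ∈ S := Algebra.subset_adjoin (by simp)
  have hnS : n ∈ S := Algebra.subset_adjoin (by simp)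
  have haS : a ∈ S := by
    rcases ha with rfl | rfl | rfl | rfl <;> simp [add_mem, sub_mem, heS, hfS, hnS]
  lift a to S using haS with x
  lift e to S using heS with e
  lift f to S using hfS with f
  lift n to S using hnS with n
  rw [← aeval_subalgebra_coe]
  refine (isNilpotent_aeval_quintic_of_isIdempotentElem (e := e) (f := f) (n := n)
    (Subtype.ext he) (Subtype.ext hf)
    ((IsNilpotent.map_iff (f := S.val) Subtype.val_injective).mp hn) ?_).map S.val
  simpa [Subtype.ext_iff] using ha

theorem isStronglyPiRegular_of_isNilpotent_aeval_quintic {R : Type*} [Ring R] {a : R}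
    (hq : IsNilpotent (aeval a quintic)) (h120 : IsNilpotent (120 : R)) :
    IsStronglyPiRegular a := by
  let T := Algebra.adjoin ℤ {a}
  let x : T := ⟨a, Algebra.self_mem_adjoin_singleton ℤ a⟩
  suffices IsStronglyPiRegular x from this.map T.val
  replace hq : IsNilpotent (x * (x ^ 2 - 1) * (x ^ 2 - 4)) := by
    rwa [← aeval_quintic, ← IsNilpotent.map_iff (f := T.val) Subtype.val_injective,
      ← aeval_algHom_apply]
  replace h120 : IsNilpotent (120 : T) := by
    rwa [← IsNilpotent.map_iff (f := T.val) Subtype.val_injective, map_ofNat]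
  refine isStronglyPiRegular_of_isNilpotent_pow_sub_pow_mul (m := 5) (g := 41 * x ^ 3 + 80 * x)
    (by norm_num) ?_
  -- Modulo each prime factor of `120`, `quintic` is `X ^ k` times a polynomial with unit constant
  -- term, so `X ^ k ∈ (X ^ (k + 1), quintic)`; this identity in `ℤ[X]` assembles these relations.
  have certificate : x ^ 5 - x ^ (5 + 1) * (41 * x ^ 3 + 80 * x) =
      x * (x ^ 2 - 1) * (x ^ 2 - 4) * (-41 * x ^ 4 - 285 * x ^ 2 - 1260) +
        120 * (42 * x - 43 * x ^ 3) := by ring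
  rw [certificate]
  exact (Commute.all _ _).isNilpotent_add ((Commute.all _ _).isNilpotent_mul_right hq)
    ((Commute.all _ _).isNilpotent_mul_right h120)

theorem wsnc_strongly_pi_regular {R : Type*} [Ring R]
    (hR : IsWeaklyStrongly2NilClean R) :
    ∀ a : R, ∃ n : ℕ, 0 < n ∧ ∃ r : R, a ^ n = a ^ (n + 1) * r := by
  have h120 : IsNilpotent (120 : R) := by
    obtain ⟨e, f, n, he, hf, hn, hef, hen, hfn, h3⟩ := hR 3
    have h := isNilpotent_aeval_quintic_of_commute he hf hn hef hen hfn h3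
    norm_num [aeval_quintic] at h
    exact h
  intro a
  obtain ⟨e, f, n, he, hf, hn, hef, hen, hfn, ha⟩ := hR a
  exact isStronglyPiRegular_of_isNilpotent_aeval_quintic
    (isNilpotent_aeval_quintic_of_commute he hf hn hef hen hfn ha) h120
end

section
/- A ring R is weakly strongly 2-nil-clean if and only if 30 is nilpotent in R and for every a ∈ R at least one of a^3 - a, a(a-1)(a-2), a(a+1)(a+2) is nilpotent. -/
open Polynomial

def IsWeaklyStrongly2NilCleanElem {R : Type*} [Ring R] (a : R) : Prop :=
  ∃ e f n : R, IsIdempotentElem e ∧ IsIdempotentElem f ∧ IsNilpotent n ∧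
    Commute e f ∧ Commute e n ∧ Commute f n ∧
    (a = e + f + n ∨ a = e - f + n ∨ a = -e + f + n ∨ a = -e - f + n)

def IsNilCubicRoot {R : Type*} [Ring R] (a : R) : Prop :=
  IsNilpotent (a ^ 3 - a) ∨ IsNilpotent (a * (a - 1) * (a - 2)) ∨
    IsNilpotent (a * (a + 1) * (a + 2))

section Ring

variable {R S : Type*} [Ring R] [Ring S]

theorem IsNilpotent.natCast_of_dvd_pow {m k j : ℕ} (hm : IsNilpotent (m : R)) (hmk : m ∣ k ^ j) :
    IsNilpotent (k : R) := by
  obtain ⟨c, hc⟩ := hmk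
  refine IsNilpotent.of_pow (m := j) ?_
  rw [← Nat.cast_pow, hc, Nat.cast_mul]
  exact (Nat.cast_commute c (m : R)).symm.isNilpotent_mul_right hm

theorem isNilpotent_thirty_of_isNilCubicRoot_three (h : IsNilCubicRoot (3 : R)) :
    IsNilpotent (30 : R) := by
  suffices IsNilpotent ((30 : ℕ) : R) by simpa using this
  rcases h with h | h | h
  · norm_num at h
    exact IsNilpotent.natCast_of_dvd_pow (m := 24) (j := 3) (by exact_mod_cast h) (by norm_num)
  · norm_num at h
    exact IsNilpotent.natCast_of_dvd_pow (m := 6) (j := 1) (by exact_mod_cast h) (by norm_num)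
  · norm_num at h
    exact IsNilpotent.natCast_of_dvd_pow (m := 60) (j := 2) (by exact_mod_cast h) (by norm_num)

theorem isNilCubicRoot_map_iff {φ : S →+* R} (hφ : Function.Injective φ) {b : S} :
    IsNilCubicRoot (φ b) ↔ IsNilCubicRoot b := by
  simp only [IsNilCubicRoot, ← IsNilpotent.map_iff hφ, map_sub, map_mul, map_add, map_pow,
    map_one, map_ofNat]

theorem IsWeaklyStrongly2NilCleanElem.map {b : S} (h : IsWeaklyStrongly2NilCleanElem b)
    (φ : S →+* R) : IsWeaklyStrongly2NilCleanElem (φ b) := by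
  obtain ⟨e, f, n, he, hf, hn, hef, hen, hfn, hb⟩ := h
  refine ⟨φ e, φ f, φ n, he.map φ, hf.map φ, hn.map φ, hef.map φ, hen.map φ, hfn.map φ, ?_⟩
  rcases hb with rfl | rfl | rfl | rfl <;> simp

theorem IsWeaklyStrongly2NilCleanElem.neg {a : R} (h : IsWeaklyStrongly2NilCleanElem a) :
    IsWeaklyStrongly2NilCleanElem (-a) := by
  obtain ⟨e, f, n, he, hf, hn, hef, hen, hfn, ha⟩ := h
  refine ⟨e, f, -n, he, hf, hn.neg, hef, hen.neg_right, hfn.neg_right, ?_⟩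
  rcases ha with rfl | rfl | rfl | rfl
  · exact Or.inr <| Or.inr <| Or.inr <| by abel
  · exact Or.inr <| Or.inr <| Or.inl <| by abel
  · exact Or.inr <| Or.inl <| by abel
  · exact Or.inl <| by abel

end Ring

section CommRing

variable {S : Type*} [CommRing S]

theorem exists_isIdempotentElem_isNilpotent_sub {u : S} (h : IsNilpotent (u ^ 2 - u)) :
    ∃ e : S, IsIdempotentElem e ∧ IsNilpotent (u - e) := by
  let φ := Ideal.Quotient.mk (nilradical S)
  have hφ (x : S) : φ x = 0 ↔ IsNilpotent x := Ideal.Quotient.eq_zero_iff_mem.trans mem_nilradical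
  have hker : ∀ x ∈ RingHom.ker φ, IsNilpotent x := fun x hx => (hφ x).1 hx
  have hu : IsIdempotentElem (φ u) := by
    rw [IsIdempotentElem, ← map_mul, ← sub_eq_zero, ← map_sub, hφ, ← sq]
    exact h
  obtain ⟨e, he, hφe⟩ := exists_isIdempotentElem_eq_of_ker_isNilpotent φ hker (φ u) ⟨u, rfl⟩ hu
  exact ⟨e, he, (hφ _).1 (by rw [map_sub, hφe, sub_self])⟩

theorem isWeaklyStrongly2NilCleanElem_of_isNilpotent_sub_add {b u v : S}
    (hu : IsNilpotent (u ^ 2 - u)) (hv : IsNilpotent (v ^ 2 - v))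
    (hb : IsNilpotent (b - (u + v))) : IsWeaklyStrongly2NilCleanElem b := by
  obtain ⟨e, he, hue⟩ := exists_isIdempotentElem_isNilpotent_sub hu
  obtain ⟨f, hf, hvf⟩ := exists_isIdempotentElem_isNilpotent_sub hv
  refine ⟨e, f, b - e - f, he, hf, ?_, .all _ _, .all _ _, .all _ _, Or.inl (by ring)⟩
  rw [show b - e - f = b - (u + v) + (u - e) + (v - f) by ring]
  exact (Commute.all _ _).isNilpotent_add ((Commute.all _ _).isNilpotent_add hb hue) hvf

theorem isWeaklyStrongly2NilCleanElem_of_isNilpotent_sub_sub {b u v : S}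
    (hu : IsNilpotent (u ^ 2 - u)) (hv : IsNilpotent (v ^ 2 - v))
    (hb : IsNilpotent (b - (u - v))) : IsWeaklyStrongly2NilCleanElem b := by
  obtain ⟨e, he, hue⟩ := exists_isIdempotentElem_isNilpotent_sub hu
  obtain ⟨f, hf, hvf⟩ := exists_isIdempotentElem_isNilpotent_sub hv
  refine ⟨e, f, b - e + f, he, hf, ?_, .all _ _, .all _ _, .all _ _, Or.inr <| Or.inl (by ring)⟩
  rw [show b - e + f = b - (u - v) + (u - e) - (v - f) by ring]
  exact (Commute.all _ _).isNilpotent_sub ((Commute.all _ _).isNilpotent_add hb hue) hvf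

theorem isNilpotent_of_mem_span_pair {x y z : S} (hx : IsNilpotent x) (hy : IsNilpotent y)
    (hz : z ∈ Ideal.span {x, y}) : IsNilpotent z := by
  rw [← mem_nilradical] at hx hy ⊢
  exact Ideal.span_le.2 (Set.insert_subset hx (Set.singleton_subset_iff.2 hy)) hz

/- `u = 7 b² + 24 b` and `v = 8 b² + 22 b` come from the Chinese remainder theorem: over `𝔽₃` and
`𝔽₅` they take the values `0, 1, 1` resp. `0, 0, 1` at the roots `0, 1, 2` of the cubic, and over
`𝔽₂` they agree with `b` and `0` on the roots. Hence `u, v` are idempotent and `b = u + v` modulo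
nilpotents. -/
theorem isWeaklyStrongly2NilCleanElem_of_isNilpotent_mul_sub_one_mul_sub_two {b : S}
    (h30 : IsNilpotent (30 : S)) (hb : IsNilpotent (b * (b - 1) * (b - 2))) :
    IsWeaklyStrongly2NilCleanElem b := by
  have key := fun {z : S} (c d : S) (hz : c * (b * (b - 1) * (b - 2)) + d * 30 = z) =>
    isNilpotent_of_mem_span_pair hb h30 (Ideal.mem_span_pair.2 ⟨c, d, hz⟩)
  refine isWeaklyStrongly2NilCleanElem_of_isNilpotent_sub_add (u := 7 * b ^ 2 + 24 * b)
    (v := 8 * b ^ 2 + 22 * b) (key (49 * b + 483) (64 * b ^ 2 - 33 * b) (by ring))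
    (key (64 * b + 544) (66 * b ^ 2 - 37 * b) (by ring)) (IsNilpotent.of_pow (m := 2) ?_)
  exact key (225 * b + 2025) (255 * b ^ 2 - 135 * b) (by ring)

/- As above: over `𝔽₃` and `𝔽₅`, `u = 23 b² + 8 b` and `v = 8 b² + 22 b` take the values `0, 1, 0`
resp. `0, 0, 1` at the roots `0, 1, -1`, and over `𝔽₂` they agree with `b` and `0` on the roots. -/
theorem isWeaklyStrongly2NilCleanElem_of_isNilpotent_pow_three_sub_self {b : S}
    (h30 : IsNilpotent (30 : S)) (hb : IsNilpotent (b ^ 3 - b)) :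
    IsWeaklyStrongly2NilCleanElem b := by
  have key := fun {z : S} (c d : S) (hz : c * (b ^ 3 - b) + d * 30 = z) =>
    isNilpotent_of_mem_span_pair hb h30 (Ideal.mem_span_pair.2 ⟨c, d, hz⟩)
  refine isWeaklyStrongly2NilCleanElem_of_isNilpotent_sub_sub (u := 23 * b ^ 2 + 8 * b)
    (v := 8 * b ^ 2 + 22 * b) (key (529 * b + 368) (19 * b ^ 2 + 12 * b) (by ring))
    (key (64 * b + 352) (18 * b ^ 2 + 11 * b) (by ring)) (IsNilpotent.of_pow (m := 2) ?_)
  exact key (225 * b - 450) (15 * b ^ 2 - 15 * b) (by ring)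

theorem isWeaklyStrongly2NilCleanElem_of_isNilCubicRoot {b : S}
    (h30 : IsNilpotent (30 : S)) (h : IsNilCubicRoot b) : IsWeaklyStrongly2NilCleanElem b := by
  rcases h with h | h | h
  · exact isWeaklyStrongly2NilCleanElem_of_isNilpotent_pow_three_sub_self h30 h
  · exact isWeaklyStrongly2NilCleanElem_of_isNilpotent_mul_sub_one_mul_sub_two h30 h
  · have h' : IsNilpotent (-b * (-b - 1) * (-b - 2)) := by
      rw [show -b * (-b - 1) * (-b - 2) = -(b * (b + 1) * (b + 2)) by ring]
      exact h.neg
    simpa using (isWeaklyStrongly2NilCleanElem_of_isNilpotent_mul_sub_one_mul_sub_two h30 h').neg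

theorem isNilCubicRoot_of_isIdempotentElem {e f n a : S} (he : IsIdempotentElem e)
    (hf : IsIdempotentElem f) (hn : IsNilpotent n)
    (ha : a = e + f + n ∨ a = e - f + n ∨ a = -e + f + n ∨ a = -e - f + n) :
    IsNilCubicRoot a := by
  have near (P : ℤ[X]) {x : S} (hx : aeval x P = 0) (hax : a - x = n) :
      IsNilpotent (aeval a P) := by
    rw [← sub_zero (aeval a P), ← hx]
    exact isNilpotent_aeval_sub_of_isNilpotent_sub P (hax ▸ hn)
  rcases ha with rfl | rfl | rfl | rfl
  · have hx : (e + f) * (e + f - 1) * (e + f - 2) = 0 := by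
      linear_combination (e + 3 * f - 2) * he.eq + (3 * e + f - 2) * hf.eq
    have := near (X * (X - 1) * (X - 2)) (by simpa [map_ofNat] using hx) (add_sub_cancel_left _ _)
    exact Or.inr <| Or.inl <| by simpa [map_ofNat] using this
  · have hx : (e - f) ^ 3 - (e - f) = 0 := by
      linear_combination (e - 3 * f + 1) * he.eq + (3 * e - f - 1) * hf.eq
    have := near (X ^ 3 - X) (by simpa using hx) (add_sub_cancel_left _ _)
    exact Or.inl <| by simpa using this
  · have hx : (-e + f) ^ 3 - (-e + f) = 0 := by
      linear_combination (-e + 3 * f - 1) * he.eq + (-3 * e + f + 1) * hf.eq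
    have := near (X ^ 3 - X) (by simpa using hx) (add_sub_cancel_left _ _)
    exact Or.inl <| by simpa using this
  · have hx : (-e - f) * (-e - f + 1) * (-e - f + 2) = 0 := by
      linear_combination (-e - 3 * f + 2) * he.eq + (-3 * e - f + 2) * hf.eq
    have := near (X * (X + 1) * (X + 2)) (by simpa [map_ofNat] using hx) (add_sub_cancel_left _ _)
    exact Or.inr <| Or.inr <| by simpa [map_ofNat] using this

end CommRing

section Ring

open scoped IsMulCommutative

variable {R : Type*} [Ring R]

theorem IsWeaklyStrongly2NilCleanElem.isNilCubicRoot {a : R}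
    (h : IsWeaklyStrongly2NilCleanElem a) : IsNilCubicRoot a := by
  obtain ⟨e, f, n, he, hf, hn, hef, hen, hfn, ha⟩ := h
  let T := Subring.closure ({e, f, n} : Set R)
  have : IsMulCommutative T := Subring.isMulCommutative_closure <| by
    simp only [Set.mem_insert_iff, Set.mem_singleton_iff]
    rintro x (rfl | rfl | rfl) y (rfl | rfl | rfl) <;> simp only [hef.eq, hen.eq, hfn.eq]
  have hT := T.subtype_injective
  let E : T := ⟨e, Subring.subset_closure (by simp)⟩
  let F : T := ⟨f, Subring.subset_closure (by simp)⟩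
  let N : T := ⟨n, Subring.subset_closure (by simp)⟩
  have haT : a ∈ T := by
    rcases ha with rfl | rfl | rfl | rfl <;> aesop
  refine (isNilCubicRoot_map_iff hT (b := ⟨a, haT⟩)).2 <|
    isNilCubicRoot_of_isIdempotentElem (e := E) (f := F) (n := N)
      (Subtype.ext he) (Subtype.ext hf) ((IsNilpotent.map_iff hT).1 hn) ?_
  simpa [Subtype.ext_iff] using ha

theorem IsNilCubicRoot.isWeaklyStrongly2NilCleanElem {a : R} (h30 : IsNilpotent (30 : R))
    (h : IsNilCubicRoot a) : IsWeaklyStrongly2NilCleanElem a := by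
  let T := Subring.closure ({a} : Set R)
  have : IsMulCommutative T := Subring.isMulCommutative_closure <| by
    rintro x rfl y rfl
    rfl
  have hT := T.subtype_injective
  let b : T := ⟨a, Subring.subset_closure rfl⟩
  have h30T : IsNilpotent (30 : T) := (IsNilpotent.map_iff hT).1 (by simpa [map_ofNat] using h30)
  exact (isWeaklyStrongly2NilCleanElem_of_isNilCubicRoot h30T
    ((isNilCubicRoot_map_iff hT (b := b)).1 h)).map T.subtype

end Ring

theorem wsnc_iff_nilpotency_conditions {R : Type*} [Ring R] :
    IsWeaklyStrongly2NilClean R ↔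
      IsNilpotent (30 : R) ∧
      ∀ a : R, IsNilpotent (a ^ 3 - a) ∨ IsNilpotent (a * (a - 1) * (a - 2)) ∨
        IsNilpotent (a * (a + 1) * (a + 2)) := by
  change (∀ a : R, IsWeaklyStrongly2NilCleanElem a) ↔ _ ∧ ∀ a : R, IsNilCubicRoot a
  refine ⟨fun h => ?_, fun ⟨h30, h⟩ a => (h a).isWeaklyStrongly2NilCleanElem h30⟩
  have hcubic (a : R) : IsNilCubicRoot a := (h a).isNilCubicRoot
  exact ⟨isNilpotent_thirty_of_isNilCubicRoot_three (hcubic 3), hcubic⟩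
end

section
/- If R is a weakly strongly 2-nil-clean ring and e is a nonzero idempotent of R, then the corner ring eRe is also weakly strongly 2-nil-clean. -/
/-!
If `a = ±e ± f + n` with commuting idempotents `e, f` and a commuting nilpotent `n`, then one of
`a`, `a + 1`, `-a` is a sum `e' + f' + n'` of the same kind, and such a sum `y` makes
`y (y - 1) (y - 2)` nilpotent. Applied to `a = 3`, this shows that `30` is nilpotent.

Conversely, in a commutative ring in which `30` is nilpotent, nilpotency of `y (y - 1) (y - 2)`
already gives `y = f + g + n`: modulo the nilradical, `8 (y² - y)` and `y - 8 (y² - y)` are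
idempotent, and idempotents lift along nil ideals. For `a ∈ eRe` everything takes place in the
commutative subring generated by `a` and `e`, where multiplying such a decomposition of `a`,
`a + 1` or `-a` by `e` gives one inside the corner.
-/

def cubic {R : Type*} [Ring R] (y : R) : R := y * (y - 1) * (y - 2)

theorem map_cubic {R S F : Type*} [Ring R] [Ring S] [FunLike F R S] [RingHomClass F R S]
    (φ : F) (y : R) : φ (cubic y) = cubic (φ y) := by
  simp [cubic, map_ofNat]

/- `30 = 0` splits `B` into a part where `2 = 0`, on which `y` is idempotent and
`8 (y² - y) = 0`, and a part where `8 = 1/2`, on which `8 (y² - y)` and `y - 8 (y² - y)` are the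
Lagrange idempotents of the root `2` and of the roots `{1, 2}` of `y (y - 1) (y - 2)`. -/
theorem IsReduced.isIdempotentElem_of_cubic_eq_zero {B : Type*} [CommRing B] [IsReduced B]
    {y : B} (h30 : (30 : B) = 0) (hy : cubic y = 0) :
    IsIdempotentElem (y - 8 * (y ^ 2 - y)) ∧ IsIdempotentElem (8 * (y ^ 2 - y)) := by
  unfold cubic at hy
  have hw : (y ^ 2 - y) ^ 2 = 2 * (y ^ 2 - y) := by linear_combination (y + 1) * hy
  have h15 : 15 * (y ^ 2 - y) = 0 :=
    IsReduced.eq_zero _ ⟨2, by linear_combination 225 * hw + 15 * (y ^ 2 - y) * h30⟩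
  constructor
  · unfold IsIdempotentElem; linear_combination 7 * h15 + (64 * y + 48) * hy
  · unfold IsIdempotentElem; linear_combination 64 * hw + 4 * (y ^ 2 - y) * h30

section CommRing

variable {A : Type*} [CommRing A]

theorem exists_eq_add_of_isNilpotent_cubic {y : A} (h30 : IsNilpotent (30 : A))
    (hy : IsNilpotent (cubic y)) :
    ∃ f g n : A, IsIdempotentElem f ∧ IsIdempotentElem g ∧ IsNilpotent n ∧
      y = f + g + n := by
  let π := Ideal.Quotient.mk (nilradical A)
  have : IsReduced (A ⧸ nilradical A) :=
    (Ideal.isRadical_iff_quotient_reduced _).mp (Ideal.radical_isRadical _)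
  have hπ (x : A) : π x = 0 ↔ IsNilpotent x := Ideal.Quotient.eq_zero_iff_mem
  have lift (F : A ⧸ nilradical A) (hF : IsIdempotentElem F) :
      ∃ f, IsIdempotentElem f ∧ π f = F :=
    exists_isIdempotentElem_eq_of_ker_isNilpotent π (fun x hx => (hπ x).mp hx) F
      (Ideal.Quotient.mk_surjective F) hF
  obtain ⟨hF, hG⟩ := IsReduced.isIdempotentElem_of_cubic_eq_zero (y := π y)
    (by simpa [map_ofNat] using (hπ _).mpr h30) (by simpa [map_cubic] using (hπ _).mpr hy)
  obtain ⟨f, hf, hπf⟩ := lift _ hF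
  obtain ⟨g, hg, hπg⟩ := lift _ hG
  refine ⟨f, g, y - f - g, hf, hg, (hπ _).mp ?_, by abel⟩
  rw [map_sub, map_sub, hπf, hπg]
  ring

theorem isNilpotent_cubic_add {f g n : A} (hf : IsIdempotentElem f) (hg : IsIdempotentElem g)
    (hn : IsNilpotent n) : IsNilpotent (cubic (f + g + n)) := by
  have : cubic (f + g + n) =
      n * (3 * (f + g) ^ 2 + 3 * (f + g) * n + n ^ 2 - 6 * (f + g) - 3 * n + 2) := by
    unfold cubic
    linear_combination (f + 3 * g - 2) * hf.eq + (g + 3 * f - 2) * hg.eq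
  rw [this]
  exact (Commute.all _ _).isNilpotent_mul_right hn

theorem exists_corner_eq_of_mul_eq_of_isNilpotent_cubic {e a : A} (he : IsIdempotentElem e)
    (hea : e * a = a) (h30 : IsNilpotent (30 : A))
    (ha : IsNilpotent (cubic a) ∨ IsNilpotent (cubic (a + 1)) ∨ IsNilpotent (cubic (-a))) :
    ∃ f g n : A, e * f = f ∧ e * g = g ∧ e * n = n ∧
      IsIdempotentElem f ∧ IsIdempotentElem g ∧ IsNilpotent n ∧
      (a = f + g + n ∨ a = f - g + n ∨ a = -f + g + n ∨ a = -f - g + n) := by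
  have corner (y : A) (hy : IsNilpotent (cubic y)) :
      ∃ f g n : A, e * f = f ∧ e * g = g ∧ e * n = n ∧
        IsIdempotentElem f ∧ IsIdempotentElem g ∧ IsNilpotent n ∧ e * y = f + g + n := by
    obtain ⟨f, g, n, hf, hg, hn, rfl⟩ := exists_eq_add_of_isNilpotent_cubic h30 hy
    refine ⟨e * f, e * g, e * n, ?_, ?_, ?_, he.mul hf, he.mul hg,
      (Commute.all _ _).isNilpotent_mul_left hn, by ring⟩ <;> rw [← mul_assoc, he.eq]
  rcases ha with ha | ha | ha
  · obtain ⟨f, g, n, hef, heg, hen, hf, hg, hn, h⟩ := corner a ha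
    exact ⟨f, g, n, hef, heg, hen, hf, hg, hn, .inl (hea ▸ h)⟩
  · obtain ⟨f, g, n, hef, heg, hen, hf, hg, hn, h⟩ := corner (a + 1) ha
    refine ⟨f, e - g, n, hef, ?_, hen, hf, ?_, hn, .inr (.inl ?_)⟩
    · rw [mul_sub, he.eq, heg]
    · unfold IsIdempotentElem; linear_combination he.eq - 2 * heg + hg.eq
    · linear_combination h - hea
  · obtain ⟨f, g, n, hef, heg, hen, hf, hg, hn, h⟩ := corner (-a) ha
    refine ⟨f, g, -n, hef, heg, by rw [mul_neg, hen], hf, hg, hn.neg, .inr (.inr (.inr ?_))⟩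
    linear_combination -h - hea

end CommRing

section Ring

variable {R : Type*} [Ring R]

open scoped IsMulCommutative in
theorem isNilpotent_cubic_add_of_commute {f g n : R} (hf : IsIdempotentElem f)
    (hg : IsIdempotentElem g) (hn : IsNilpotent n) (hfg : Commute f g) (hfn : Commute f n)
    (hgn : Commute g n) : IsNilpotent (cubic (f + g + n)) := by
  let C := Subring.closure ({f, g, n} : Set R)
  have := Subring.isMulCommutative_closure (s := {f, g, n}) (by
    simp only [Set.mem_insert_iff, Set.mem_singleton_iff]
    rintro x (rfl | rfl | rfl) y (rfl | rfl | rfl) <;>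
      first | rfl | exact Commute.eq ‹_› | exact (Commute.eq ‹_›).symm)
  let f' : C := ⟨f, Subring.subset_closure (by simp)⟩
  let g' : C := ⟨g, Subring.subset_closure (by simp)⟩
  let n' : C := ⟨n, Subring.subset_closure (by simp)⟩
  have key := isNilpotent_cubic_add (A := C) (f := f') (g := g') (n := n')
    (Subtype.ext hf.eq) (Subtype.ext hg.eq)
    ((IsNilpotent.map_iff (f := C.subtype) Subtype.val_injective).mp hn)
  have := key.map C.subtype
  rwa [map_cubic] at this

theorem IsWeaklyStrongly2NilClean.isNilpotent_cubic (hR : IsWeaklyStrongly2NilClean R) (a : R) :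
    IsNilpotent (cubic a) ∨ IsNilpotent (cubic (a + 1)) ∨ IsNilpotent (cubic (-a)) := by
  obtain ⟨e, f, n, he, hf, hn, hef, hen, hfn, h | h | h | h⟩ := hR a <;> subst h
  · exact .inl (isNilpotent_cubic_add_of_commute he hf hn hef hen hfn)
  · refine .inr (.inl ?_)
    rw [show e - f + n + 1 = e + (1 - f) + n by abel]
    exact isNilpotent_cubic_add_of_commute he hf.one_sub hn ((Commute.one_right e).sub_right hef)
      hen ((Commute.one_left n).sub_left hfn)
  · refine .inr (.inl ?_)
    rw [show -e + f + n + 1 = f + (1 - e) + n by abel]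
    exact isNilpotent_cubic_add_of_commute hf he.one_sub hn
      ((Commute.one_right f).sub_right hef.symm) hfn ((Commute.one_left n).sub_left hen)
  · refine .inr (.inr ?_)
    rw [show -(-e - f + n) = e + f + -n by abel]
    exact isNilpotent_cubic_add_of_commute he hf hn.neg hef hen.neg_right hfn.neg_right

theorem IsWeaklyStrongly2NilClean.isNilpotent_thirty (hR : IsWeaklyStrongly2NilClean R) :
    IsNilpotent (30 : R) := by
  refine IsNilpotent.of_pow (m := 3) ?_
  rcases hR.isNilpotent_cubic 3 with h | h | h <;> norm_num [cubic] at h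
  · rw [show (30 : R) ^ 3 = 4500 * 6 by norm_num]
    exact (Commute.ofNat_left _ _).isNilpotent_mul_left h
  · rw [show (30 : R) ^ 3 = 1125 * 24 by norm_num]
    exact (Commute.ofNat_left _ _).isNilpotent_mul_left h
  · rw [show (30 : R) ^ 3 = 450 * 60 by norm_num]
    exact (Commute.ofNat_left _ _).isNilpotent_mul_left h

open scoped IsMulCommutative in
theorem IsIdempotentElem.exists_corner_eq_of_isNilpotent_cubic {e a : R}
    (he : IsIdempotentElem e) (ha : a = e * a * e) (h30 : IsNilpotent (30 : R))
    (hcubic : IsNilpotent (cubic a) ∨ IsNilpotent (cubic (a + 1)) ∨ IsNilpotent (cubic (-a))) :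
    ∃ f g n : R, f = e * f * e ∧ g = e * g * e ∧ n = e * n * e ∧
      f * f = f ∧ g * g = g ∧ IsNilpotent n ∧
      Commute f g ∧ Commute f n ∧ Commute g n ∧
      (a = f + g + n ∨ a = f - g + n ∨ a = -f + g + n ∨ a = -f - g + n) := by
  have hea : e * a = a := by rw [ha, ← mul_assoc, ← mul_assoc, he.eq]
  have hae : a * e = a := by rw [ha, mul_assoc, he.eq]
  have hae' : Commute a e := hae.trans hea.symm
  let C := Subring.closure ({a, e} : Set R)
  have := Subring.isMulCommutative_closure (s := {a, e}) (by
    simp only [Set.mem_insert_iff, Set.mem_singleton_iff]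
    rintro x (rfl | rfl) y (rfl | rfl) <;> first | rfl | exact hae'.eq | exact hae'.eq.symm)
  let a' : C := ⟨a, Subring.subset_closure (by simp)⟩
  let e' : C := ⟨e, Subring.subset_closure (by simp)⟩
  have he' : IsIdempotentElem e' := Subtype.ext he.eq
  have nilpotent_iff (x : C) : IsNilpotent x ↔ IsNilpotent (x : R) :=
    (IsNilpotent.map_iff (f := C.subtype) Subtype.val_injective).symm
  have cubic_iff (x : C) : IsNilpotent (cubic x) ↔ IsNilpotent (cubic (x : R)) :=
    (nilpotent_iff _).trans (Iff.of_eq (congrArg IsNilpotent (map_cubic C.subtype x)))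
  obtain ⟨f, g, n, hef, heg, hen, hf, hg, hn, h⟩ :=
    exists_corner_eq_of_mul_eq_of_isNilpotent_cubic (A := C) (e := e') (a := a') he'
      (Subtype.ext hea) ((nilpotent_iff 30).mpr (by rwa [← map_ofNat C.subtype 30] at h30))
      (hcubic.imp (cubic_iff a').mpr <| .imp (cubic_iff (a' + 1)).mpr (cubic_iff (-a')).mpr)
  have corner (x : C) (hx : e' * x = x) : (x : R) = e * x * e := by
    have : e' * x * e' = x := by rw [mul_right_comm, he'.eq, hx]
    exact (congrArg Subtype.val this).symm
  refine ⟨f, g, n, corner f hef, corner g heg, corner n hen, congrArg Subtype.val hf.eq,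
    congrArg Subtype.val hg.eq, hn.map C.subtype, (Commute.all f g).map C.subtype,
    (Commute.all f n).map C.subtype, (Commute.all g n).map C.subtype, ?_⟩
  rcases h with h | h | h | h
  · exact .inl (congrArg Subtype.val h)
  · exact .inr (.inl (congrArg Subtype.val h))
  · exact .inr (.inr (.inl (congrArg Subtype.val h)))
  · exact .inr (.inr (.inr (congrArg Subtype.val h)))

end Ring

theorem corner_wsnc_general {R : Type*} [Ring R] (hR : IsWeaklyStrongly2NilClean R)
    (e : R) (he : IsIdempotentElem e) :
    ∀ a : R, a = e * a * e →
      ∃ f g n : R, f = e * f * e ∧ g = e * g * e ∧ n = e * n * e ∧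
        f * f = f ∧ g * g = g ∧ IsNilpotent n ∧
        Commute f g ∧ Commute f n ∧ Commute g n ∧
        (a = f + g + n ∨ a = f - g + n ∨ a = -f + g + n ∨ a = -f - g + n) :=
  fun a ha => he.exists_corner_eq_of_isNilpotent_cubic ha hR.isNilpotent_thirty
    (hR.isNilpotent_cubic a)

theorem corner_wsnc {R : Type*} [Ring R] (hR : IsWeaklyStrongly2NilClean R)
    (e : R) (he : IsIdempotentElem e) (hne : e ≠ 0) :
    ∀ a : R, a = e * a * e →
      ∃ f g n : R, f = e * f * e ∧ g = e * g * e ∧ n = e * n * e ∧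
        f * f = f ∧ g * g = g ∧ IsNilpotent n ∧
        Commute f g ∧ Commute f n ∧ Commute g n ∧
        (a = f + g + n ∨ a = f - g + n ∨ a = -f + g + n ∨ a = -f - g + n) :=
  corner_wsnc_general hR e he
end
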